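/- arXiv:2403.12501 — 2 statements merged into one kernel-verified Lean document; each statement's English description precedes it below -/
import Mathlib

section
/- Suppose two bounded measurable maps G, G^I : U → ℝ^d satisfy sup_{u∈U} |G(u) − G^I(u)| ≤ ε. Then the corresponding Bayesian posteriors γ^y and γ^{I,y} (with densities proportional to exp(−(1/2)|y − G(u)|_Σ²) and exp(−(1/2)|y − G^I(u)|_Σ²) with respect to a common prior γ) satisfy d_Hell(γ^y, γ^{I,y}) ≤ C(y) ε for a constant C(y) depending only on y, Σ, and the uniform bound on G, G^I. -/
/-!
Put `L = ‖y‖ + M` and `m = exp (-L² / 2)`. Both potentials take values in `[0, L² / 2]`, so the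
likelihoods `exp (-Φ)`, `exp (-Φ^I)` and their integrals `Z`, `Z^I` all lie in `[m, 1]`. On that
range `exp (-·)` is `1`-Lipschitz and `Φ` is `L`-Lipschitz in the forward map, so likelihoods and
normalising constants differ by at most `L ε`; since `(a, Z) ↦ a / Z` is `1 / m²`-Lipschitz and
`√` is `1 / (2 √m)`-Lipschitz on `[m, ∞)`, the square roots of the two posterior densities differ
pointwise by at most `L ε / (√m m²)`, which bounds the Hellinger distance.
-/

open MeasureTheory Set

namespace Real

lemma abs_sqrt_sub_sqrt_le {m x z : ℝ} (hm : 0 < m) (hx : m ≤ x) (hz : m ≤ z) :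
    |√x - √z| ≤ |x - z| / (2 * √m) := by
  have hsum : 2 * √m ≤ √x + √z := by linarith [sqrt_le_sqrt hx, sqrt_le_sqrt hz]
  have hfactor : x - z = (√x - √z) * (√x + √z) := by
    calc x - z = √x ^ 2 - √z ^ 2 := by rw [sq_sqrt (hm.le.trans hx), sq_sqrt (hm.le.trans hz)]
      _ = (√x - √z) * (√x + √z) := by ring
  have hsm : 0 < √m := sqrt_pos.mpr hm
  rw [le_div_iff₀ (by positivity), hfactor, abs_mul, abs_of_pos (by linarith : 0 < √x + √z)]
  exact mul_le_mul_of_nonneg_left hsum (abs_nonneg _)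

lemma abs_exp_neg_sub_exp_neg_le {s t : ℝ} (hs : 0 ≤ s) (ht : 0 ≤ t) :
    |exp (-s) - exp (-t)| ≤ |s - t| := by
  wlog hts : t ≤ s generalizing s t
  · rw [abs_sub_comm, abs_sub_comm s]
    exact this ht hs (le_of_not_ge hts)
  have hdecomp : exp (-t) - exp (-s) = exp (-t) * (1 - exp (-(s - t))) := by
    rw [mul_sub, ← exp_add]
    ring_nf
  have hgap : 0 ≤ 1 - exp (-(s - t)) := sub_nonneg.mpr (exp_le_one_iff.mpr (by linarith))
  have hdecay : exp (-t) * (1 - exp (-(s - t))) ≤ 1 * (s - t) :=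
    mul_le_mul (exp_le_one_iff.mpr (by linarith)) (by linarith [one_sub_le_exp_neg (s - t)])
      hgap zero_le_one
  rw [abs_sub_comm, abs_of_nonneg (by rw [hdecomp]; positivity), abs_of_nonneg (by linarith),
    hdecomp]
  linarith

end Real

lemma abs_div_sub_div_le {m a b Z₁ Z₂ : ℝ} (hm : 0 < m) (hb : b ∈ Icc 0 1) (hZ₁ : m ≤ Z₁)
    (hZ₂ : Z₂ ∈ Icc m 1) : |a / Z₁ - b / Z₂| ≤ (|a - b| + |Z₁ - Z₂|) / m ^ 2 := by
  have hZ₁0 : 0 < Z₁ := hm.trans_le hZ₁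
  have hZ₂0 : 0 < Z₂ := hm.trans_le hZ₂.1
  have hsplit : a / Z₁ - b / Z₂ = ((a - b) * Z₂ + b * (Z₂ - Z₁)) / (Z₁ * Z₂) := by
    field_simp
    ring
  have hnum : |(a - b) * Z₂ + b * (Z₂ - Z₁)| ≤ |a - b| + |Z₁ - Z₂| := by
    refine (abs_add_le _ _).trans ?_
    rw [abs_mul, abs_mul, abs_of_pos hZ₂0, abs_of_nonneg hb.1, abs_sub_comm Z₂]
    gcongr
    · exact mul_le_of_le_one_right (abs_nonneg _) hZ₂.2
    · exact mul_le_of_le_one_left (abs_nonneg _) hb.2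
  have hden : m ^ 2 ≤ |Z₁ * Z₂| := by
    rw [abs_of_pos (mul_pos hZ₁0 hZ₂0), sq]
    exact mul_le_mul hZ₁ hZ₂.1 hm.le hZ₁0.le
  rw [hsplit, abs_div]
  exact div_le_div₀ (by positivity) hnum (by positivity) hden

lemma abs_sqrt_div_sub_sqrt_div_le {m δ a b Z₁ Z₂ : ℝ} (hm : 0 < m) (ha : a ∈ Icc m 1)
    (hb : b ∈ Icc m 1) (hZ₁ : Z₁ ∈ Icc m 1) (hZ₂ : Z₂ ∈ Icc m 1) (hab : |a - b| ≤ δ)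
    (hZ : |Z₁ - Z₂| ≤ δ) : |√(a / Z₁) - √(b / Z₂)| ≤ δ / (√m * m ^ 2) := by
  have hquot {c Z : ℝ} (hc : c ∈ Icc m 1) (hZ : Z ∈ Icc m 1) : m ≤ c / Z := by
    rw [le_div_iff₀ (hm.trans_le hZ.1)]
    nlinarith [hc.1, hZ.2]
  have hsm : 0 < √m := Real.sqrt_pos.mpr hm
  calc |√(a / Z₁) - √(b / Z₂)| ≤ |a / Z₁ - b / Z₂| / (2 * √m) :=
        Real.abs_sqrt_sub_sqrt_le hm (hquot ha hZ₁) (hquot hb hZ₂)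
    _ ≤ (|a - b| + |Z₁ - Z₂|) / m ^ 2 / (2 * √m) := by
        gcongr
        exact abs_div_sub_div_le hm ⟨hm.le.trans hb.1, hb.2⟩ hZ₁.1 hZ₂
    _ ≤ (2 * δ) / m ^ 2 / (2 * √m) := by gcongr; linarith
    _ = δ / (√m * m ^ 2) := by field_simp

section ProbabilityMeasure

variable {U : Type*} [MeasurableSpace U] {μ : Measure U} [IsProbabilityMeasure μ]

lemma abs_integral_sub_integral_le {f g : U → ℝ} (hf : Integrable f μ) (hg : Integrable g μ)
    {δ : ℝ} (hfg : ∀ u, |f u - g u| ≤ δ) : |∫ u, f u ∂μ - ∫ u, g u ∂μ| ≤ δ := by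
  rw [← integral_sub hf hg]
  simpa using norm_integral_le_of_norm_le_const (μ := μ)
    (ae_of_all _ fun u => (Real.norm_eq_abs _).trans_le (hfg u))

lemma sqrt_half_integral_sq_le {h : U → ℝ} {c : ℝ} (hc : ∀ u, |h u| ≤ c) :
    √((1 / 2) * ∫ u, h u ^ 2 ∂μ) ≤ c := by
  obtain ⟨u₀⟩ := nonempty_of_isProbabilityMeasure μ
  have hc0 : 0 ≤ c := (abs_nonneg _).trans (hc u₀)
  have hsq : ∀ u, ‖h u ^ 2‖ ≤ c ^ 2 := fun u => by
    rw [Real.norm_eq_abs, abs_pow]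
    exact pow_le_pow_left₀ (abs_nonneg _) (hc u) 2
  have hle : ∫ u, h u ^ 2 ∂μ ≤ c ^ 2 := by
    simpa using (le_abs_self _).trans (norm_integral_le_of_norm_le_const (μ := μ) (ae_of_all _ hsq))
  have hnonneg : 0 ≤ ∫ u, h u ^ 2 ∂μ := integral_nonneg fun u => sq_nonneg _
  calc √((1 / 2) * ∫ u, h u ^ 2 ∂μ) ≤ √(c ^ 2) := Real.sqrt_le_sqrt (by linarith)
    _ = c := Real.sqrt_sq hc0

lemma sqrt_half_integral_sq_sqrt_normalized_sub_le {f g : U → ℝ} (hf : Integrable f μ)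
    (hg : Integrable g μ) {m δ : ℝ} (hm : 0 < m) (hfm : ∀ u, f u ∈ Icc m 1)
    (hgm : ∀ u, g u ∈ Icc m 1) (hfg : ∀ u, |f u - g u| ≤ δ) :
    √((1 / 2) * ∫ u, (√(f u / ∫ v, f v ∂μ) - √(g u / ∫ v, g v ∂μ)) ^ 2 ∂μ)
      ≤ δ / (√m * m ^ 2) := by
  have hZf := (convex_Icc m 1).integral_mem isClosed_Icc (ae_of_all _ hfm) hf
  have hZg := (convex_Icc m 1).integral_mem isClosed_Icc (ae_of_all _ hgm) hg
  exact sqrt_half_integral_sq_le fun u => abs_sqrt_div_sub_sqrt_div_le hm (hfm u) (hgm u) hZf hZg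
    (hfg u) (abs_integral_sub_integral_le hf hg hfg)

end ProbabilityMeasure

section Likelihood

variable {U E : Type*} [NormedAddCommGroup E]

lemma abs_half_sq_norm_sub_half_sq_norm_le {a b : E} {L : ℝ} (ha : ‖a‖ ≤ L) (hb : ‖b‖ ≤ L) :
    |1 / 2 * ‖a‖ ^ 2 - 1 / 2 * ‖b‖ ^ 2| ≤ L * ‖a - b‖ := by
  have hfactor : 1 / 2 * ‖a‖ ^ 2 - 1 / 2 * ‖b‖ ^ 2 = (‖a‖ + ‖b‖) / 2 * (‖a‖ - ‖b‖) := by ring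
  rw [hfactor, abs_mul, abs_of_nonneg (by positivity)]
  exact mul_le_mul (by linarith) (abs_norm_sub_norm_le a b) (abs_nonneg _)
    ((norm_nonneg a).trans ha)

/-- The unnormalised posterior density `exp (-Φ(u; y))` of the forward map `F`. -/
noncomputable def likelihood (y : E) (F : U → E) (u : U) : ℝ :=
  Real.exp (-(1 / 2 * ‖y - F u‖ ^ 2))

lemma likelihood_mem_Icc {M : ℝ} (y : E) {F : U → E} (hF : ∀ u, ‖F u‖ ≤ M) (u : U) :
    likelihood y F u ∈ Icc (Real.exp (-(1 / 2 * (‖y‖ + M) ^ 2))) 1 := by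
  have hdist : ‖y - F u‖ ≤ ‖y‖ + M := norm_sub_le_of_le le_rfl (hF u)
  refine ⟨Real.exp_le_exp.mpr ?_, Real.exp_le_one_iff.mpr ?_⟩
  · nlinarith [norm_nonneg (y - F u)]
  · nlinarith [norm_nonneg (y - F u)]

lemma abs_likelihood_sub_likelihood_le {M : ℝ} (y : E) {G GI : U → E} (hG : ∀ u, ‖G u‖ ≤ M)
    (hGI : ∀ u, ‖GI u‖ ≤ M) (u : U) :
    |likelihood y G u - likelihood y GI u| ≤ (‖y‖ + M) * ‖G u - GI u‖ := by
  have hdiff : (y - G u) - (y - GI u) = -(G u - GI u) := by abel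
  calc |likelihood y G u - likelihood y GI u|
      ≤ |1 / 2 * ‖y - G u‖ ^ 2 - 1 / 2 * ‖y - GI u‖ ^ 2| :=
        Real.abs_exp_neg_sub_exp_neg_le (by positivity) (by positivity)
    _ ≤ (‖y‖ + M) * ‖G u - GI u‖ := by
        rw [← norm_neg (G u - GI u), ← hdiff]
        exact abs_half_sq_norm_sub_half_sq_norm_le (norm_sub_le_of_le le_rfl (hG u))
          (norm_sub_le_of_le le_rfl (hGI u))

lemma integrable_likelihood [MeasurableSpace U] [MeasurableSpace E] [BorelSpace E]
    {μ : Measure U} [IsFiniteMeasure μ] (y : E) {F : U → E} (hF : Measurable F) :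
    Integrable (likelihood y F) μ := by
  refine .of_bound (Measurable.aestronglyMeasurable (by unfold likelihood; fun_prop)) 1
    (ae_of_all _ fun u => ?_)
  unfold likelihood
  rw [Real.norm_of_nonneg (Real.exp_pos _).le]
  exact Real.exp_le_one_iff.mpr (by simp only [neg_nonpos]; positivity)

end Likelihood

theorem posterior_hellinger_forward_perturbation_general
    {U : Type*} [MeasurableSpace U] (γ : Measure U) [IsProbabilityMeasure γ]
    {E : Type*} [NormedAddCommGroup E] [MeasurableSpace E]
    [BorelSpace E]
    (M : ℝ) (hM : 0 < M) (y : E) :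
    ∃ C : ℝ, 0 < C ∧ ∀ (G GI : U → E), Measurable G → Measurable GI →
      (∀ u, ‖G u‖ ≤ M) → (∀ u, ‖GI u‖ ≤ M) → ∀ ε : ℝ, 0 ≤ ε →
      (∀ u, ‖G u - GI u‖ ≤ ε) →
      Real.sqrt ((1 / 2) * ∫ u,
          (Real.sqrt (Real.exp (-((1 / 2) * ‖y - G u‖ ^ 2)) /
              (∫ v, Real.exp (-((1 / 2) * ‖y - G v‖ ^ 2)) ∂γ)) -
           Real.sqrt (Real.exp (-((1 / 2) * ‖y - GI u‖ ^ 2)) /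
              (∫ v, Real.exp (-((1 / 2) * ‖y - GI v‖ ^ 2)) ∂γ))) ^ 2 ∂γ)
        ≤ C * ε := by
  set L := ‖y‖ + M
  set m := Real.exp (-(1 / 2 * L ^ 2))
  have hL : 0 < L := by positivity
  refine ⟨L / (√m * m ^ 2), by positivity, ?_⟩
  intro G GI hG hGI hGM hGIM ε _ hGGI
  have hbound := sqrt_half_integral_sq_sqrt_normalized_sub_le (integrable_likelihood (μ := γ) y hG)
    (integrable_likelihood y hGI) (Real.exp_pos _) (likelihood_mem_Icc y hGM)
    (likelihood_mem_Icc y hGIM) fun u => (abs_likelihood_sub_likelihood_le y hGM hGIM u).trans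
      (mul_le_mul_of_nonneg_left (hGGI u) hL.le)
  exact hbound.trans_eq (by ring)

/-- Hellinger continuity of the posterior with respect to perturbation of the forward map:
if two bounded measurable forward maps `G`, `GI` satisfy `sup_u ‖G u - GI u‖ ≤ ε`, then the
corresponding posteriors (with densities `exp(-Φ)/Z`, `exp(-Φ^I)/Z^I` w.r.t. the prior `γ`,
where `Φ(u) = (1/2)‖y - G u‖²`) satisfy `d_Hell(γ^y, γ^{I,y}) ≤ C ε`, with `C` depending
only on `y` and the uniform bound `M` (not on `G`, `GI`, `ε`). -/
theorem posterior_hellinger_forward_perturbation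
    {U : Type*} [MeasurableSpace U] (γ : Measure U) [IsProbabilityMeasure γ]
    {E : Type*} [NormedAddCommGroup E] [InnerProductSpace ℝ E] [MeasurableSpace E]
    [BorelSpace E]
    (M : ℝ) (hM : 0 < M) (y : E) :
    ∃ C : ℝ, 0 < C ∧ ∀ (G GI : U → E), Measurable G → Measurable GI →
      (∀ u, ‖G u‖ ≤ M) → (∀ u, ‖GI u‖ ≤ M) → ∀ ε : ℝ, 0 ≤ ε →
      (∀ u, ‖G u - GI u‖ ≤ ε) →
      Real.sqrt ((1 / 2) * ∫ u,
          (Real.sqrt (Real.exp (-((1 / 2) * ‖y - G u‖ ^ 2)) /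
              (∫ v, Real.exp (-((1 / 2) * ‖y - G v‖ ^ 2)) ∂γ)) -
           Real.sqrt (Real.exp (-((1 / 2) * ‖y - GI u‖ ^ 2)) /
              (∫ v, Real.exp (-((1 / 2) * ‖y - GI v‖ ^ 2)) ∂γ))) ^ 2 ∂γ)
        ≤ C * ε :=
  posterior_hellinger_forward_perturbation_general γ M hM y
end

section
/- With the multilevel sample size choice M_{ll'} = 2^{2(L−(l+l'))} and L'(l) = L − l, the total number of degrees of freedom ∑_{l=1}^L ∑_{l'=1}^{L−l} 2^{2(L−(l+l'))}(2^{3l} + 2^{3l'}) + ∑_{l=1}^L 2^{2(L−l)} 2^{3l} + ∑_{l'=1}^L 2^{3l'} + 2^{2L} is bounded by C·2^{3L} for a constant C independent of L. -/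
/-!
After dividing by `2^{3L}`, every summand becomes a power `2^{-e}`. For each fixed outer
index the exponents are pairwise distinct, so every inner sum is dominated by the geometric series
`∑ 2^{-n} = 2`. In the double sum one factor `2^{-(L-l)}` resp. `2^{-3l}` depends on the outer
index only, and summing it over `l` costs another factor `2`.
-/

open Finset

lemma sum_pow_le_inv_one_sub_of_injOn {ι : Type*} {s : Finset ι} {f : ι → ℕ}
    (hf : Set.InjOn f s) {x : ℝ} (h₀ : 0 ≤ x) (h₁ : x < 1) :
    ∑ i ∈ s, x ^ f i ≤ (1 - x)⁻¹ := by
  rw [← sum_image (f := (x ^ ·)) hf, ← tsum_geometric_of_lt_one h₀ h₁]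
  exact (summable_geometric_of_lt_one h₀ h₁).sum_le_tsum _ fun n _ => pow_nonneg h₀ n

lemma sum_inv_two_pow_le_two_of_injOn {ι : Type*} {s : Finset ι} {f : ι → ℕ}
    (hf : Set.InjOn f s) : ∑ i ∈ s, (2⁻¹ : ℝ) ^ f i ≤ 2 :=
  (sum_pow_le_inv_one_sub_of_injOn hf (by norm_num) (by norm_num)).trans_eq (by norm_num)

lemma sum_sum_inv_two_pow_add_le_four {ι κ : Type*} {s : Finset ι} {t : ι → Finset κ}
    {f : ι → ℕ} {g : ι → κ → ℕ} (hf : Set.InjOn f s) (hg : ∀ i ∈ s, Set.InjOn (g i) (t i)) :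
    ∑ i ∈ s, ∑ j ∈ t i, (2⁻¹ : ℝ) ^ (f i + g i j) ≤ 4 :=
  calc ∑ i ∈ s, ∑ j ∈ t i, (2⁻¹ : ℝ) ^ (f i + g i j)
      = ∑ i ∈ s, (2⁻¹ : ℝ) ^ f i * ∑ j ∈ t i, (2⁻¹ : ℝ) ^ g i j := by
        simp only [pow_add, mul_sum]
    _ ≤ ∑ i ∈ s, (2⁻¹ : ℝ) ^ f i * 2 :=
        sum_le_sum fun i hi => by gcongr; exact sum_inv_two_pow_le_two_of_injOn (hg i hi)
    _ ≤ 2 * 2 := by rw [← sum_mul]; gcongr; exact sum_inv_two_pow_le_two_of_injOn hf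
    _ = 4 := by norm_num

lemma pow_eq_pow_mul_inv_pow {G₀ : Type*} [GroupWithZero G₀] {x : G₀} (hx : x ≠ 0)
    {k m n : ℕ} (h : k + m = n) : x ^ k = x ^ n * x⁻¹ ^ m := by
  subst h
  rw [pow_add, mul_assoc, inv_pow, mul_inv_cancel₀ (pow_ne_zero m hx), mul_one]

lemma zpow_two_mul_sub_natCast {G : Type*} [DivInvMonoid G] (x : G) {a b : ℕ} (h : b ≤ a) :
    x ^ (2 * ((a : ℤ) - (b : ℤ))) = x ^ (2 * (a - b)) := by
  rw [← zpow_natCast]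
  congr 1
  push_cast [h]
  ring

lemma mlmcmc_cross_term_eq {L l l' : ℕ} (h : l + l' ≤ L) :
    (2 : ℝ) ^ (2 * ((L : ℤ) - ((l : ℤ) + (l' : ℤ)))) * ((2 : ℝ) ^ (3 * l) + (2 : ℝ) ^ (3 * l'))
      = 2 ^ (3 * L) * ((2⁻¹ : ℝ) ^ (L - l + 2 * l') + (2⁻¹ : ℝ) ^ (3 * l + (L - l - l'))) := by
  rw [← Nat.cast_add, zpow_two_mul_sub_natCast 2 h, mul_add, ← pow_add, ← pow_add,
    pow_eq_pow_mul_inv_pow two_ne_zero (k := 2 * (L - (l + l')) + 3 * l) (n := 3 * L)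
      (m := L - l + 2 * l') (by omega),
    pow_eq_pow_mul_inv_pow two_ne_zero (k := 2 * (L - (l + l')) + 3 * l') (n := 3 * L)
      (m := 3 * l + (L - l - l')) (by omega),
    mul_add]

lemma mlmcmc_cross_cost_le (L : ℕ) :
    ∑ l ∈ Icc 1 L, ∑ l' ∈ Icc 1 (L - l),
        (2 : ℝ) ^ (2 * ((L : ℤ) - ((l : ℤ) + (l' : ℤ)))) *
          ((2 : ℝ) ^ (3 * l) + (2 : ℝ) ^ (3 * l'))
      ≤ 8 * 2 ^ (3 * L) := by
  have hcoarse : ∑ l ∈ Icc 1 L, ∑ l' ∈ Icc 1 (L - l), (2⁻¹ : ℝ) ^ (L - l + 2 * l') ≤ 4 :=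
    sum_sum_inv_two_pow_add_le_four
      (fun a ha b hb hab => by simp only [coe_Icc, Set.mem_Icc] at ha hb; omega)
      (fun _ _ a _ b _ hab => by omega)
  have hfine : ∑ l ∈ Icc 1 L, ∑ l' ∈ Icc 1 (L - l), (2⁻¹ : ℝ) ^ (3 * l + (L - l - l')) ≤ 4 :=
    sum_sum_inv_two_pow_add_le_four (fun a _ b _ hab => by omega)
      (fun _ _ a ha b hb hab => by simp only [coe_Icc, Set.mem_Icc] at ha hb; omega)
  calc _ = 2 ^ (3 * L) * (∑ l ∈ Icc 1 L, ∑ l' ∈ Icc 1 (L - l), (2⁻¹ : ℝ) ^ (L - l + 2 * l')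
          + ∑ l ∈ Icc 1 L, ∑ l' ∈ Icc 1 (L - l), (2⁻¹ : ℝ) ^ (3 * l + (L - l - l'))) := by
        rw [← sum_add_distrib, mul_sum]
        refine sum_congr rfl fun l hl => ?_
        rw [← sum_add_distrib, mul_sum]
        refine sum_congr rfl fun l' hl' => mlmcmc_cross_term_eq ?_
        simp only [mem_Icc] at hl hl'
        omega
    _ ≤ 2 ^ (3 * L) * (4 + 4) := by gcongr
    _ = 8 * 2 ^ (3 * L) := by ring

lemma mlmcmc_level_cost_le (L : ℕ) :
    ∑ l ∈ Icc 1 L, (2 : ℝ) ^ (2 * ((L : ℤ) - (l : ℤ))) * (2 : ℝ) ^ (3 * l) ≤ 2 * 2 ^ (3 * L) :=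
  calc _ = ∑ l ∈ Icc 1 L, 2 ^ (3 * L) * (2⁻¹ : ℝ) ^ (L - l) := by
        refine sum_congr rfl fun l hl => ?_
        have hlL : l ≤ L := (mem_Icc.mp hl).2
        rw [zpow_two_mul_sub_natCast 2 hlL, ← pow_add,
          pow_eq_pow_mul_inv_pow two_ne_zero (n := 3 * L) (m := L - l) (by omega)]
    _ ≤ 2 ^ (3 * L) * 2 := by
        rw [← mul_sum]
        gcongr
        exact sum_inv_two_pow_le_two_of_injOn
          fun a ha b hb hab => by simp only [coe_Icc, Set.mem_Icc] at ha hb; omega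
    _ = 2 * 2 ^ (3 * L) := mul_comm _ _

lemma sum_two_pow_three_mul_le (L : ℕ) :
    ∑ l ∈ Icc 1 L, (2 : ℝ) ^ (3 * l) ≤ 2 * 2 ^ (3 * L) :=
  calc _ = ∑ l ∈ Icc 1 L, 2 ^ (3 * L) * (2⁻¹ : ℝ) ^ (3 * (L - l)) :=
        sum_congr rfl fun l hl =>
          pow_eq_pow_mul_inv_pow two_ne_zero (by have := (mem_Icc.mp hl).2; omega)
    _ ≤ 2 ^ (3 * L) * 2 := by
        rw [← mul_sum]
        gcongr
        exact sum_inv_two_pow_le_two_of_injOn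
          fun a ha b hb hab => by simp only [coe_Icc, Set.mem_Icc] at ha hb; omega
    _ = 2 * 2 ^ (3 * L) := mul_comm _ _

/-- With the multilevel sample sizes `M_{ll'} = 2^{2(L-(l+l'))}` and `L'(l) = L - l`, the
total number of degrees of freedom of the MLMCMC estimator is bounded by `C · 2^{3L}` with
`C` independent of `L`. -/
theorem mlmcmc_cost_bound :
    ∃ C : ℝ, 0 < C ∧ ∀ L : ℕ, 1 ≤ L →
      (∑ l ∈ Finset.Icc 1 L, ∑ l' ∈ Finset.Icc 1 (L - l),
          (2 : ℝ) ^ (2 * ((L : ℤ) - ((l : ℤ) + (l' : ℤ)))) *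
            ((2 : ℝ) ^ (3 * l) + (2 : ℝ) ^ (3 * l')))
        + (∑ l ∈ Finset.Icc 1 L, (2 : ℝ) ^ (2 * ((L : ℤ) - (l : ℤ))) * (2 : ℝ) ^ (3 * l))
        + (∑ l' ∈ Finset.Icc 1 L, (2 : ℝ) ^ (3 * l'))
        + (2 : ℝ) ^ (2 * L)
      ≤ C * (2 : ℝ) ^ (3 * L) := by
  refine ⟨13, by norm_num, fun L _ => ?_⟩
  have hlast : (2 : ℝ) ^ (2 * L) ≤ 2 ^ (3 * L) := pow_le_pow_right₀ one_le_two (by omega)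
  linarith [mlmcmc_cross_cost_le L, mlmcmc_level_cost_le L, sum_two_pow_three_mul_le L]
end
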